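/- Let T = (c₁,c₂,c₃,c₄,0,0,f₁,f₂,f₃,f₄,t₁,t₂) and T′ = (c₁,c₂,c₃,c₄,0,0,f₁′,f₂′,f₃′,f₄′,t₁′,t₂′) be tuples in ℤ¹² with the same values c₁, c₂, c₃, c₄, all nonzero, and with gcd(c₁,c₄) = gcd(c₂,c₃) = gcd(c₂,c₄) = 1. Then T and T′ are ψ-equivalent if and only if: f₁ ≡ f₁′ (mod c₁) and c₁c₂f₃ + c₁c₃f₂ + c₂c₃f₁ ≡ c₁c₂f₃′ + c₁c₃f₂′ + c₂c₃f₁′ (mod c₁c₄). -/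

import Mathlib

/-- A 12-tuple of integers, with coordinates written `(c₁,…,c₆,f₁,…,f₄,t₁,t₂)`. -/
structure Tuple : Type where
  c1 : ℤ
  c2 : ℤ
  c3 : ℤ
  c4 : ℤ
  c5 : ℤ
  c6 : ℤ
  f1 : ℤ
  f2 : ℤ
  f3 : ℤ
  f4 : ℤ
  t1 : ℤ
  t2 : ℤ

/-- The move ψ₂₁ : f₃↦f₃+c₅, f₄↦f₄−c₁, t₁↦t₁+f₁. -/
def psi21 : Equiv.Perm Tuple where
  toFun x := { x with f3 := x.f3 + x.c5, f4 := x.f4 - x.c1, t1 := x.t1 + x.f1 }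
  invFun x := { x with f3 := x.f3 - x.c5, f4 := x.f4 + x.c1, t1 := x.t1 - x.f1 }
  left_inv x := by cases x; simp
  right_inv x := by cases x; simp

/-- The move ψ₄₁ : f₂↦f₂+c₆, f₃↦f₃−c₅, t₂↦t₂−f₁. -/
def psi41 : Equiv.Perm Tuple where
  toFun x := { x with f2 := x.f2 + x.c6, f3 := x.f3 - x.c5, t2 := x.t2 - x.f1 }
  invFun x := { x with f2 := x.f2 - x.c6, f3 := x.f3 + x.c5, t2 := x.t2 + x.f1 }
  left_inv x := by cases x; simp
  right_inv x := by cases x; simp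

/-- The move ψ₁₂ : f₃↦f₃−c₄, f₄↦f₄+c₂, t₁↦t₁+f₂. -/
def psi12 : Equiv.Perm Tuple where
  toFun x := { x with f3 := x.f3 - x.c4, f4 := x.f4 + x.c2, t1 := x.t1 + x.f2 }
  invFun x := { x with f3 := x.f3 + x.c4, f4 := x.f4 - x.c2, t1 := x.t1 - x.f2 }
  left_inv x := by cases x; simp
  right_inv x := by cases x; simp

/-- The move ψ₃₂ : f₁↦f₁+c₆, f₄↦f₄−c₂, t₂↦t₂−f₂. -/
def psi32 : Equiv.Perm Tuple where
  toFun x := { x with f1 := x.f1 + x.c6, f4 := x.f4 - x.c2, t2 := x.t2 - x.f2 }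
  invFun x := { x with f1 := x.f1 - x.c6, f4 := x.f4 + x.c2, t2 := x.t2 + x.f2 }
  left_inv x := by cases x; simp
  right_inv x := by cases x; simp

/-- The move ψ₄₃ : f₁↦f₁+c₅, f₂↦f₂−c₄, t₁↦t₁+f₃. -/
def psi43 : Equiv.Perm Tuple where
  toFun x := { x with f1 := x.f1 + x.c5, f2 := x.f2 - x.c4, t1 := x.t1 + x.f3 }
  invFun x := { x with f1 := x.f1 - x.c5, f2 := x.f2 + x.c4, t1 := x.t1 - x.f3 }
  left_inv x := by cases x; simp
  right_inv x := by cases x; simp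

/-- The move ψ₂₃ : f₁↦f₁−c₅, f₄↦f₄+c₃, t₂↦t₂−f₃. -/
def psi23 : Equiv.Perm Tuple where
  toFun x := { x with f1 := x.f1 - x.c5, f4 := x.f4 + x.c3, t2 := x.t2 - x.f3 }
  invFun x := { x with f1 := x.f1 + x.c5, f4 := x.f4 - x.c3, t2 := x.t2 + x.f3 }
  left_inv x := by cases x; simp
  right_inv x := by cases x; simp

/-- The move ψ₃₄ : f₁↦f₁−c₁, f₂↦f₂+c₂, t₁↦t₁+f₄. -/
def psi34 : Equiv.Perm Tuple where
  toFun x := { x with f1 := x.f1 - x.c1, f2 := x.f2 + x.c2, t1 := x.t1 + x.f4 }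
  invFun x := { x with f1 := x.f1 + x.c1, f2 := x.f2 - x.c2, t1 := x.t1 - x.f4 }
  left_inv x := by cases x; simp
  right_inv x := by cases x; simp

/-- The move ψ₁₄ : f₂↦f₂−c₂, f₃↦f₃+c₃, t₂↦t₂−f₄. -/
def psi14 : Equiv.Perm Tuple where
  toFun x := { x with f2 := x.f2 - x.c2, f3 := x.f3 + x.c3, t2 := x.t2 - x.f4 }
  invFun x := { x with f2 := x.f2 + x.c2, f3 := x.f3 - x.c3, t2 := x.t2 + x.f4 }
  left_inv x := by cases x; simp
  right_inv x := by cases x; simp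

/-- The list of the eight ψ-moves. -/
def psiMoves : List (Equiv.Perm Tuple) :=
  [psi21, psi41, psi12, psi32, psi43, psi23, psi34, psi14]

/-- Two tuples are ψ-equivalent if one is obtained from the other by a finite
composition of the eight ψ-moves and their inverses, i.e. they are related by the
equivalence relation generated by single applications of the moves. -/
def PsiEquiv : Tuple → Tuple → Prop :=
  Relation.EqvGen (fun x y => ∃ g ∈ psiMoves, g x = y)


/-!
On the slice `c₅ = c₆ = 0` every move translates `(f₁, f₂, f₃, f₄)` by a fixed vector and adds a
linear form in `f` to `t₁` or `t₂`. Only `ψ₃₄`, `ψ₁₂` and `ψ₄₃` change `f₁` or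
`c₁c₂f₃ + c₁c₃f₂ + c₂c₃f₁`, and only by multiples of `c₁` and `c₁c₄` respectively, which gives
the invariants. Conversely, the commutator of powers of two moves fixes `f` and shifts `t` by a
product of the exponents with one of the `cᵢ`. This shifts `t₁` by multiples of `c₃`, `t₂` by
multiples of `c₁` and of `c₄`, and `(t₁, t₂)` by multiples of `(-c₂, c₂)`, so the coprimality
assumptions make `t` free. It remains
to match `f`: `f₁` with `ψ₃₄`, then `f₂` with `ψ₁₄` and `ψ₄₃` (as `gcd(c₂,c₄) = 1`), then `f₃` with
`ψ₁₂` and `f₄` with `ψ₃₂` and `ψ₂₃`; the congruence on the weighted sum is exactly what makes the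
`f₃` step possible.
-/

namespace PsiEquiv

variable {x y z : Tuple}

protected theorem refl (x : Tuple) : PsiEquiv x x := Relation.EqvGen.refl x

protected theorem symm (h : PsiEquiv x y) : PsiEquiv y x := Relation.EqvGen.symm x y h

protected theorem trans (h : PsiEquiv x y) (h' : PsiEquiv y z) : PsiEquiv x z :=
  Relation.EqvGen.trans x y z h h'

theorem iff_of_forall_move {P : Tuple → Prop} (hP : ∀ g ∈ psiMoves, ∀ y, P (g y) ↔ P y)
    (h : PsiEquiv x y) : P x ↔ P y := by
  induction h with
  | rel a b hab =>
    obtain ⟨g, hg, rfl⟩ := hab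
    exact (hP g hg a).symm
  | refl => exact Iff.rfl
  | symm _ _ _ ih => exact ih.symm
  | trans _ _ _ _ _ ih ih' => exact ih.trans ih'

theorem of_iterate {g : Equiv.Perm Tuple} (hg : g ∈ psiMoves) {F : ℤ → Tuple}
    (hF : ∀ n, g (F n) = F (n + 1)) (n : ℤ) : PsiEquiv (F 0) (F n) := by
  have step (n : ℤ) : PsiEquiv (F n) (F (n + 1)) := .rel _ _ ⟨g, hg, hF n⟩
  induction n using Int.induction_on with
  | zero => exact .refl _
  | succ n ih => exact ih.trans (step n)
  | pred n ih =>
    have h := step (-n - 1)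
    rw [sub_add_cancel] at h
    exact ih.trans h.symm

theorem iterate_psi41 (x : Tuple) (n : ℤ) :
    PsiEquiv x { x with f2 := x.f2 + n * x.c6, f3 := x.f3 - n * x.c5, t2 := x.t2 - n * x.f1 } := by
  simpa using of_iterate (g := psi41) (by simp [psiMoves])
    (F := fun n => { x with f2 := x.f2 + n * x.c6, f3 := x.f3 - n * x.c5, t2 := x.t2 - n * x.f1 })
    (fun n => by
      simp only [psi41, Equiv.coe_fn_mk, Tuple.mk.injEq, true_and]
      and_intros <;> ring) n

theorem iterate_psi12 (x : Tuple) (n : ℤ) :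
    PsiEquiv x { x with f3 := x.f3 - n * x.c4, f4 := x.f4 + n * x.c2, t1 := x.t1 + n * x.f2 } := by
  simpa using of_iterate (g := psi12) (by simp [psiMoves])
    (F := fun n => { x with f3 := x.f3 - n * x.c4, f4 := x.f4 + n * x.c2, t1 := x.t1 + n * x.f2 })
    (fun n => by
      simp only [psi12, Equiv.coe_fn_mk, Tuple.mk.injEq, true_and, and_true]
      and_intros <;> ring) n

theorem iterate_psi32 (x : Tuple) (n : ℤ) :
    PsiEquiv x { x with f1 := x.f1 + n * x.c6, f4 := x.f4 - n * x.c2, t2 := x.t2 - n * x.f2 } := by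
  simpa using of_iterate (g := psi32) (by simp [psiMoves])
    (F := fun n => { x with f1 := x.f1 + n * x.c6, f4 := x.f4 - n * x.c2, t2 := x.t2 - n * x.f2 })
    (fun n => by
      simp only [psi32, Equiv.coe_fn_mk, Tuple.mk.injEq, true_and]
      and_intros <;> ring) n

theorem iterate_psi43 (x : Tuple) (n : ℤ) :
    PsiEquiv x { x with f1 := x.f1 + n * x.c5, f2 := x.f2 - n * x.c4, t1 := x.t1 + n * x.f3 } := by
  simpa using of_iterate (g := psi43) (by simp [psiMoves])
    (F := fun n => { x with f1 := x.f1 + n * x.c5, f2 := x.f2 - n * x.c4, t1 := x.t1 + n * x.f3 })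
    (fun n => by
      simp only [psi43, Equiv.coe_fn_mk, Tuple.mk.injEq, true_and, and_true]
      and_intros <;> ring) n

theorem iterate_psi23 (x : Tuple) (n : ℤ) :
    PsiEquiv x { x with f1 := x.f1 - n * x.c5, f4 := x.f4 + n * x.c3, t2 := x.t2 - n * x.f3 } := by
  simpa using of_iterate (g := psi23) (by simp [psiMoves])
    (F := fun n => { x with f1 := x.f1 - n * x.c5, f4 := x.f4 + n * x.c3, t2 := x.t2 - n * x.f3 })
    (fun n => by
      simp only [psi23, Equiv.coe_fn_mk, Tuple.mk.injEq, true_and]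
      and_intros <;> ring) n

theorem iterate_psi34 (x : Tuple) (n : ℤ) :
    PsiEquiv x { x with f1 := x.f1 - n * x.c1, f2 := x.f2 + n * x.c2, t1 := x.t1 + n * x.f4 } := by
  simpa using of_iterate (g := psi34) (by simp [psiMoves])
    (F := fun n => { x with f1 := x.f1 - n * x.c1, f2 := x.f2 + n * x.c2, t1 := x.t1 + n * x.f4 })
    (fun n => by
      simp only [psi34, Equiv.coe_fn_mk, Tuple.mk.injEq, true_and, and_true]
      and_intros <;> ring) n

theorem iterate_psi14 (x : Tuple) (n : ℤ) :
    PsiEquiv x { x with f2 := x.f2 - n * x.c2, f3 := x.f3 + n * x.c3, t2 := x.t2 - n * x.f4 } := by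
  simpa using of_iterate (g := psi14) (by simp [psiMoves])
    (F := fun n => { x with f2 := x.f2 - n * x.c2, f3 := x.f3 + n * x.c3, t2 := x.t2 - n * x.f4 })
    (fun n => by
      simp only [psi14, Equiv.coe_fn_mk, Tuple.mk.injEq, true_and]
      and_intros <;> ring) n

theorem t1_add_mul_c3 (x : Tuple) (k : ℤ) : PsiEquiv x { x with t1 := x.t1 + k * x.c3 } := by
  convert (((iterate_psi14 x k).trans (iterate_psi43 _ 1)).trans (iterate_psi14 _ (-k))).trans
    (iterate_psi43 _ (-1)) using 1
  simp only [Tuple.mk.injEq, true_and]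
  and_intros <;> ring

theorem t1_sub_t2_add_mul_c2 (x : Tuple) (k : ℤ) :
    PsiEquiv x { x with t1 := x.t1 - k * x.c2, t2 := x.t2 + k * x.c2 } := by
  convert (((iterate_psi14 x k).trans (iterate_psi12 _ 1)).trans (iterate_psi14 _ (-k))).trans
    (iterate_psi12 _ (-1)) using 1
  simp only [Tuple.mk.injEq, true_and]
  and_intros <;> ring

theorem t2_add_mul_c1 (x : Tuple) (k : ℤ) : PsiEquiv x { x with t2 := x.t2 + k * x.c1 } := by
  convert (((iterate_psi34 x k).trans (iterate_psi41 _ 1)).trans (iterate_psi34 _ (-k))).trans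
    (iterate_psi41 _ (-1)) using 1
  simp only [Tuple.mk.injEq, true_and]
  and_intros <;> ring

theorem t2_sub_mul_c4 (x : Tuple) (k : ℤ) : PsiEquiv x { x with t2 := x.t2 - k * x.c4 } := by
  convert (((iterate_psi32 x k).trans (iterate_psi43 _ 1)).trans (iterate_psi32 _ (-k))).trans
    (iterate_psi43 _ (-1)) using 1
  simp only [Tuple.mk.injEq, true_and]
  and_intros <;> ring

theorem update_t2 (h14 : IsCoprime x.c1 x.c4) (s : ℤ) : PsiEquiv x { x with t2 := s } := by
  obtain ⟨r, w, hrw⟩ := h14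
  convert (t2_add_mul_c1 x ((s - x.t2) * r)).trans (t2_sub_mul_c4 _ (-(s - x.t2) * w)) using 1
  simp only [Tuple.mk.injEq, true_and]
  linear_combination -(s - x.t2) * hrw

theorem update_t (h23 : IsCoprime x.c2 x.c3) (h14 : IsCoprime x.c1 x.c4) (s₁ s₂ : ℤ) :
    PsiEquiv x { x with t1 := s₁, t2 := s₂ } := by
  obtain ⟨p, q, hpq⟩ := h23
  convert ((t1_sub_t2_add_mul_c2 x (-(s₁ - x.t1) * p)).trans
    (t1_add_mul_c3 _ ((s₁ - x.t1) * q))).trans (update_t2 (by exact h14) s₂) using 1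
  simp only [Tuple.mk.injEq, true_and, and_true]
  linear_combination -(s₁ - x.t1) * hpq

end PsiEquiv

def Tuple.weightedSum (x : Tuple) : ℤ :=
  x.c1 * x.c2 * x.f3 + x.c1 * x.c3 * x.f2 + x.c2 * x.c3 * x.f1

def Tuple.coeffs (x : Tuple) : ℤ × ℤ × ℤ × ℤ × ℤ × ℤ := (x.c1, x.c2, x.c3, x.c4, x.c5, x.c6)

theorem coeffs_move {g : Equiv.Perm Tuple} (hg : g ∈ psiMoves) (x : Tuple) :
    (g x).coeffs = x.coeffs := by
  simp only [psiMoves, List.mem_cons, List.not_mem_nil, or_false] at hg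
  rcases hg with rfl | rfl | rfl | rfl | rfl | rfl | rfl | rfl <;> rfl

theorem modEq_move {g : Equiv.Perm Tuple} (hg : g ∈ psiMoves) {x : Tuple} (h5 : x.c5 = 0)
    (h6 : x.c6 = 0) :
    (g x).f1 ≡ x.f1 [ZMOD x.c1] ∧ (g x).weightedSum ≡ x.weightedSum [ZMOD x.c1 * x.c4] := by
  obtain ⟨c1, c2, c3, c4, c5, c6, f1, f2, f3, f4, t1, t2⟩ := x
  dsimp only at h5 h6
  subst h5 h6
  simp only [psiMoves, List.mem_cons, List.not_mem_nil, or_false] at hg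
  simp only [Int.modEq_iff_dvd, Tuple.weightedSum]
  rcases hg with rfl | rfl | rfl | rfl | rfl | rfl | rfl | rfl
  · exact ⟨⟨0, by simp [psi21]⟩, ⟨0, by simp [psi21]⟩⟩
  · exact ⟨⟨0, by simp [psi41]⟩, ⟨0, by simp [psi41]⟩⟩
  · exact ⟨⟨0, by simp [psi12]⟩, ⟨c2, by simp [psi12]; ring⟩⟩
  · exact ⟨⟨0, by simp [psi32]⟩, ⟨0, by simp [psi32]⟩⟩
  · exact ⟨⟨0, by simp [psi43]⟩, ⟨c3, by simp [psi43]; ring⟩⟩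
  · exact ⟨⟨0, by simp [psi23]⟩, ⟨0, by simp [psi23]⟩⟩
  · exact ⟨⟨1, by simp [psi34]⟩, ⟨0, by simp [psi34]; ring⟩⟩
  · exact ⟨⟨0, by simp [psi14]⟩, ⟨0, by simp [psi14]; ring⟩⟩

theorem PsiEquiv.modEq {x y : Tuple} (h : PsiEquiv x y) (h5 : x.c5 = 0) (h6 : x.c6 = 0) :
    y.f1 ≡ x.f1 [ZMOD x.c1] ∧ y.weightedSum ≡ x.weightedSum [ZMOD x.c1 * x.c4] := by
  let P (z : Tuple) : Prop :=
    z.coeffs = x.coeffs ∧ z.f1 ≡ x.f1 [ZMOD x.c1] ∧ z.weightedSum ≡ x.weightedSum [ZMOD x.c1 * x.c4]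
  suffices hP : ∀ g ∈ psiMoves, ∀ z, P (g z) ↔ P z from
    ((h.iff_of_forall_move hP).1 ⟨rfl, .refl _, .refl _⟩).2
  intro g hg z
  simp only [P, coeffs_move hg]
  refine and_congr_right fun hz => ?_
  simp only [Tuple.coeffs, Prod.mk.injEq] at hz
  obtain ⟨e1, -, -, e4, e5, e6⟩ := hz
  obtain ⟨h1, hq⟩ := modEq_move hg (e5.trans h5) (e6.trans h6)
  simp only [e1, e4] at h1 hq
  exact and_congr ⟨h1.symm.trans, h1.trans⟩ ⟨hq.symm.trans, hq.trans⟩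

section Slice

variable {c1 c2 c3 c4 : ℤ}

theorem psiEquiv_change_f4 (h23 : IsCoprime c2 c3) (h14 : IsCoprime c1 c4)
    (f1 f2 f3 f4 t1 t2 f4' t1' t2' : ℤ) :
    PsiEquiv ⟨c1, c2, c3, c4, 0, 0, f1, f2, f3, f4, t1, t2⟩
      ⟨c1, c2, c3, c4, 0, 0, f1, f2, f3, f4', t1', t2'⟩ := by
  obtain ⟨p, q, hpq⟩ := id h23
  have h := (PsiEquiv.iterate_psi32 ⟨c1, c2, c3, c4, 0, 0, f1, f2, f3, f4, t1, t2⟩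
    (-(f4' - f4) * p)).trans (PsiEquiv.iterate_psi23 _ ((f4' - f4) * q))
  dsimp only at h
  simp only [mul_zero, add_zero, sub_zero] at h
  rw [show f4 - -(f4' - f4) * p * c2 + (f4' - f4) * q * c3 = f4' by
    linear_combination (f4' - f4) * hpq] at h
  exact h.trans (PsiEquiv.update_t h23 h14 t1' t2')

theorem psiEquiv_change_f3_f4 (h23 : IsCoprime c2 c3) (h14 : IsCoprime c1 c4)
    {f3 f3' : ℤ} (hf3 : c4 ∣ f3 - f3') (f1 f2 f4 t1 t2 f4' t1' t2' : ℤ) :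
    PsiEquiv ⟨c1, c2, c3, c4, 0, 0, f1, f2, f3, f4, t1, t2⟩
      ⟨c1, c2, c3, c4, 0, 0, f1, f2, f3', f4', t1', t2'⟩ := by
  obtain ⟨m, hm⟩ := hf3
  have h := PsiEquiv.iterate_psi12 ⟨c1, c2, c3, c4, 0, 0, f1, f2, f3, f4, t1, t2⟩ m
  dsimp only at h
  rw [show f3 - m * c4 = f3' by linear_combination hm] at h
  exact h.trans (psiEquiv_change_f4 h23 h14 _ _ _ _ _ _ f4' t1' t2')

theorem psiEquiv_change_f2_f3_f4 (h23 : IsCoprime c2 c3) (h14 : IsCoprime c1 c4)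
    (h24 : IsCoprime c2 c4) {f2 f3 f2' f3' : ℤ} (hf : c4 ∣ c2 * (f3 - f3') + c3 * (f2 - f2'))
    (f1 f4 t1 t2 f4' t1' t2' : ℤ) :
    PsiEquiv ⟨c1, c2, c3, c4, 0, 0, f1, f2, f3, f4, t1, t2⟩
      ⟨c1, c2, c3, c4, 0, 0, f1, f2', f3', f4', t1', t2'⟩ := by
  obtain ⟨a, b, hab⟩ := id h24
  set d := f2 - f2'
  have h := (PsiEquiv.iterate_psi14 ⟨c1, c2, c3, c4, 0, 0, f1, f2, f3, f4, t1, t2⟩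
    (d * a)).trans (PsiEquiv.iterate_psi43 _ (d * b))
  dsimp only at h
  simp only [mul_zero, add_zero] at h
  rw [show f2 - d * a * c2 - d * b * c4 = f2' by linear_combination -d * hab] at h
  refine h.trans
    (psiEquiv_change_f3_f4 h23 h14 (h24.symm.dvd_of_dvd_mul_left ?_) _ _ _ _ _ f4' t1' t2')
  rw [show c2 * (f3 + d * a * c3 - f3') = c2 * (f3 - f3') + c3 * d - c4 * (b * c3 * d) by
    linear_combination c3 * d * hab]
  exact dvd_sub hf (dvd_mul_right _ _)

theorem psiEquiv_of_dvd (hc1 : c1 ≠ 0) (h23 : IsCoprime c2 c3) (h14 : IsCoprime c1 c4)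
    (h24 : IsCoprime c2 c4) {f1 f2 f3 f4 t1 t2 f1' f2' f3' f4' t1' t2' : ℤ}
    (hf1 : c1 ∣ f1 - f1')
    (hq : c1 * c4 ∣ (c1 * c2 * f3 + c1 * c3 * f2 + c2 * c3 * f1) -
      (c1 * c2 * f3' + c1 * c3 * f2' + c2 * c3 * f1')) :
    PsiEquiv ⟨c1, c2, c3, c4, 0, 0, f1, f2, f3, f4, t1, t2⟩
      ⟨c1, c2, c3, c4, 0, 0, f1', f2', f3', f4', t1', t2'⟩ := by
  obtain ⟨u, hu⟩ := hf1
  have h := PsiEquiv.iterate_psi34 ⟨c1, c2, c3, c4, 0, 0, f1, f2, f3, f4, t1, t2⟩ u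
  dsimp only at h
  rw [show f1 - u * c1 = f1' by linear_combination hu] at h
  refine h.trans (psiEquiv_change_f2_f3_f4 h23 h14 h24 ?_ _ _ _ _ f4' t1' t2')
  rw [← mul_dvd_mul_iff_left hc1, show c1 * (c2 * (f3 - f3') + c3 * (f2 + u * c2 - f2')) =
    c1 * c2 * f3 + c1 * c3 * f2 + c2 * c3 * f1 - (c1 * c2 * f3' + c1 * c3 * f2' + c2 * c3 * f1') by
    linear_combination -c2 * c3 * hu]
  exact hq

end Slice

theorem classification_case5_general (c1 c2 c3 c4 f1 f2 f3 f4 t1 t2 f1' f2' f3' f4' t1' t2' : ℤ)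
    (hc1 : c1 ≠ 0)
    (h14 : Int.gcd c1 c4 = 1) (h23 : Int.gcd c2 c3 = 1) (h24 : Int.gcd c2 c4 = 1) :
    PsiEquiv ⟨c1, c2, c3, c4, 0, 0, f1, f2, f3, f4, t1, t2⟩
        ⟨c1, c2, c3, c4, 0, 0, f1', f2', f3', f4', t1', t2'⟩ ↔
      (c1 ∣ f1 - f1' ∧
        c1 * c4 ∣ (c1 * c2 * f3 + c1 * c3 * f2 + c2 * c3 * f1) -
          (c1 * c2 * f3' + c1 * c3 * f2' + c2 * c3 * f1')) := by
  refine ⟨fun h => ?_, fun ⟨hf1, hq⟩ => ?_⟩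
  · obtain ⟨hf1, hq⟩ := h.modEq rfl rfl
    exact ⟨Int.modEq_iff_dvd.1 hf1, Int.modEq_iff_dvd.1 hq⟩
  · simp only [← Int.isCoprime_iff_gcd_eq_one] at h14 h23 h24
    exact psiEquiv_of_dvd hc1 h23 h14 h24 hf1 hq

/-- Classification when c₅ = c₆ = 0, c₁, c₂, c₃, c₄ ≠ 0 and
gcd(c₁,c₄) = gcd(c₂,c₃) = gcd(c₂,c₄) = 1: two such tuples are ψ-equivalent iff
f₁ ≡ f₁′ (mod c₁) and c₁c₂f₃+c₁c₃f₂+c₂c₃f₁ ≡ c₁c₂f₃′+c₁c₃f₂′+c₂c₃f₁′ (mod c₁c₄). -/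
theorem classification_case5 (c1 c2 c3 c4 f1 f2 f3 f4 t1 t2 f1' f2' f3' f4' t1' t2' : ℤ)
    (hc1 : c1 ≠ 0) (hc2 : c2 ≠ 0) (hc3 : c3 ≠ 0) (hc4 : c4 ≠ 0)
    (h14 : Int.gcd c1 c4 = 1) (h23 : Int.gcd c2 c3 = 1) (h24 : Int.gcd c2 c4 = 1) :
    PsiEquiv ⟨c1, c2, c3, c4, 0, 0, f1, f2, f3, f4, t1, t2⟩
        ⟨c1, c2, c3, c4, 0, 0, f1', f2', f3', f4', t1', t2'⟩ ↔
      (c1 ∣ f1 - f1' ∧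
        c1 * c4 ∣ (c1 * c2 * f3 + c1 * c3 * f2 + c2 * c3 * f1) -
          (c1 * c2 * f3' + c1 * c3 * f2' + c2 * c3 * f1')) :=
  classification_case5_general c1 c2 c3 c4 f1 f2 f3 f4 t1 t2 f1' f2' f3' f4' t1' t2' hc1 h14 h23 h24
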